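/- arXiv:2307.11059 — 4 statements merged into one kernel-verified Lean document; each statement's English description precedes it below -/
import Mathlib

section
/- Let D be a dense countably infinite mesh in I^n and fix an integer k with 1 ≤ k ≤ n. Let B, C : D → I be functions with C ≤ B, L_k^{(C,B)}(DU) ≥ 0 for all DU ∈ R_k(D), and γ_{k,D}^{(C,B)}(d) = 0 for all d ∈ D. Assume C(v) = B(v) for all vertices v of the unit cube I^n, and that there exists a k-box Q with vertices in D such that V_{C,k}(Q) = v < 0. Then there exist s ∈ {1,…,2^{k−1}} and an enumeration x_1,…,x_{2^{k−1}} of the vertices of Q with multiplicity m_Q(x_i) = 1 such that: for each i ∈ {1,…,s}, C(x_i) < B(x_i) and there exists DU_i ∈ R_k(D) with m_{DU_i}(x_i) < 0 and L_k^{(C,B)}(DU_i)/|m_{DU_i}(x_i)| < |v|/s; and C(x_i) = B(x_i) for each i with s < i ≤ 2^{k−1}. -/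
open scoped Classical BigOperators

namespace KIncr

/-- Points of the ambient space `ℝ^n`. -/
abbrev Pt (n : ℕ) := Fin n → ℝ

/-- Membership in the unit cube `I^n = [0,1]^n`. -/
def inCube {n : ℕ} (x : Pt n) : Prop := ∀ i, x i ∈ Set.Icc (0:ℝ) 1

/-- The unit cube as a set. -/
def cubeSet (n : ℕ) : Set (Pt n) := {x | inCube x}

/-- Vertices of the unit cube `I^n`. -/
def isCubeVertex {n : ℕ} (x : Pt n) : Prop := ∀ i, x i = 0 ∨ x i = 1

/-- A (formal) box, given by its lower-left and upper-right corners. -/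
structure Box (n : ℕ) where
  lo : Pt n
  hi : Pt n

/-- `R` is a `k`-box in `I^n`: exactly `k` coordinates are nondegenerate. -/
def Box.IsKBox {n : ℕ} (k : ℕ) (R : Box n) : Prop :=
  inCube R.lo ∧ inCube R.hi ∧ (∀ i, R.lo i ≤ R.hi i) ∧
    (Finset.univ.filter (fun i => R.lo i < R.hi i)).card = k

/-- `v` is a vertex of the box `R`. -/
def Box.IsVertex {n : ℕ} (R : Box n) (v : Pt n) : Prop :=
  ∀ i, v i = R.lo i ∨ v i = R.hi i

/-- The (finite) set of vertices of a box. -/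
noncomputable def Box.vertices {n : ℕ} (R : Box n) : Finset (Pt n) :=
  Finset.image (fun ε : Fin n → Bool => fun i => if ε i then R.hi i else R.lo i)
    Finset.univ

/-- The sign `(-1)^(m-(n-k))` of a vertex `v` of a `k`-box, where
`m = #{i : v i = lo i}`;  since `m ≥ n - k`, this equals `(-1)^(m+(n-k))`. -/
noncomputable def Box.sign {n : ℕ} (k : ℕ) (R : Box n) (v : Pt n) : ℤ :=
  (-1) ^ ((Finset.univ.filter (fun i => v i = R.lo i)).card + (n - k))

/-- The multiplicity `m_R(u)` of a point `u` with respect to a `k`-box `R`. -/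
noncomputable def Box.mult {n : ℕ} (k : ℕ) (R : Box n) (u : Pt n) : ℤ :=
  if R.IsVertex u then R.sign k u else 0

/-- `V_{A,k}(R) = ∑_{v ∈ ver R} sign_R(v) · A(v)`. -/
noncomputable def Vvol {n : ℕ} (k : ℕ) (A : Pt n → ℝ) (R : Box n) : ℝ :=
  ∑ v ∈ R.vertices, (R.sign k v : ℝ) * A v

/-- A function is `k`-increasing on `D` if `V_{A,k}(R) ≥ 0` for every `k`-box
with all vertices in `D`. -/
def KIncreasingOn {n : ℕ} (k : ℕ) (D : Set (Pt n)) (A : Pt n → ℝ) : Prop :=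
  ∀ R : Box n, R.IsKBox k → (∀ v ∈ R.vertices, v ∈ D) → 0 ≤ Vvol k A R

/-- The multiplicity `m_DU(u)` of a point with respect to a formal (multiset)
disjoint union of `k`-boxes. -/
noncomputable def multDU {n : ℕ} (k : ℕ) (DU : Multiset (Box n)) (u : Pt n) : ℤ :=
  (DU.map (fun R => R.mult k u)).sum

/-- `DU ∈ R_k(D)`: every box of the multiset `DU` is a `k`-box with all its
vertices in `D`. -/
def memRk {n : ℕ} (k : ℕ) (D : Set (Pt n)) (DU : Multiset (Box n)) : Prop :=
  ∀ R ∈ DU, R.IsKBox k ∧ ∀ v ∈ R.vertices, v ∈ D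

/-- `L_k^{(A,B)}(DU) = ∑_{m_DU(u)>0} m_DU(u)·B(u) + ∑_{m_DU(u)<0} m_DU(u)·A(u)`. -/
noncomputable def Lk {n : ℕ} (k : ℕ) (A B : Pt n → ℝ) (DU : Multiset (Box n)) : ℝ :=
  ∑ u ∈ DU.toFinset.biUnion Box.vertices,
    (if 0 < multDU k DU u then (multDU k DU u : ℝ) * B u
     else if multDU k DU u < 0 then (multDU k DU u : ℝ) * A u else 0)

/-- `P⁻_{k,D}^{(A,B)}(x)`, with the Mathlib convention `sInf ∅ = 0`. -/
noncomputable def Pneg {n : ℕ} (k : ℕ) (D : Set (Pt n)) (A B : Pt n → ℝ) (x : Pt n) : ℝ :=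
  sInf {r : ℝ | ∃ DU : Multiset (Box n), memRk k D DU ∧ multDU k DU x < 0 ∧
    r = Lk k A B DU / |(multDU k DU x : ℝ)|}

/-- `P⁺_{k,D}^{(A,B)}(x)`, with the Mathlib convention `sInf ∅ = 0`. -/
noncomputable def Ppos {n : ℕ} (k : ℕ) (D : Set (Pt n)) (A B : Pt n → ℝ) (x : Pt n) : ℝ :=
  sInf {r : ℝ | ∃ DU : Multiset (Box n), memRk k D DU ∧ 0 < multDU k DU x ∧
    r = Lk k A B DU / |(multDU k DU x : ℝ)|}

/-- `γ_{k,D}^{(A,B)}(x) = min {P⁻_{k,D}^{(A,B)}(x), B(x) - A(x)}`. -/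
noncomputable def gammaK {n : ℕ} (k : ℕ) (D : Set (Pt n)) (A B : Pt n → ℝ) (x : Pt n) : ℝ :=
  min (Pneg k D A B x) (B x - A x)

/-- `δ_{k,D}^{(A,B)}(x) = min {P⁺_{k,D}^{(A,B)}(x), B(x) - A(x)}`. -/
noncomputable def deltaK {n : ℕ} (k : ℕ) (D : Set (Pt n)) (A B : Pt n → ℝ) (x : Pt n) : ℝ :=
  min (Ppos k D A B x) (B x - A x)

/-- A dense countably infinite mesh `D = ∏ δᵢ` in `I^n`. -/
def IsMesh {n : ℕ} (D : Set (Pt n)) : Prop :=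
  ∃ δ : Fin n → Set ℝ,
    (∀ i, δ i ⊆ Set.Icc (0:ℝ) 1 ∧ (δ i).Countable ∧ (δ i).Infinite ∧
      Set.Icc (0:ℝ) 1 ⊆ closure (δ i) ∧ (0:ℝ) ∈ δ i ∧ (1:ℝ) ∈ δ i) ∧
    D = {x : Pt n | ∀ i, x i ∈ δ i}

/-- `A` is grounded: it vanishes whenever some coordinate is `0`. -/
def Grounded {n : ℕ} (A : Pt n → ℝ) : Prop :=
  ∀ x : Pt n, inCube x → (∃ i, x i = 0) → A x = 0

/-- `A` is 1-increasing (increasing in each variable). -/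
def OneIncreasing {n : ℕ} (A : Pt n → ℝ) : Prop :=
  ∀ x y : Pt n, inCube x → inCube y → (∀ i, x i ≤ y i) → A x ≤ A y

/-- `A` has uniform marginals. -/
def UniformMarginals {n : ℕ} (A : Pt n → ℝ) : Prop :=
  ∀ i : Fin n, ∀ t ∈ Set.Icc (0:ℝ) 1, A (Function.update (fun _ => (1:ℝ)) i t) = t

/-- `A` is a standardized function. -/
def Standardized {n : ℕ} (A : Pt n → ℝ) : Prop :=
  Grounded A ∧ OneIncreasing A ∧ A (fun _ => (1:ℝ)) = 1

/-- `A` is a semicopula. -/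
def Semicopula {n : ℕ} (A : Pt n → ℝ) : Prop :=
  Grounded A ∧ OneIncreasing A ∧ UniformMarginals A

/-- `A` maps the unit cube into `I = [0,1]`. -/
def MapsToI {n : ℕ} (A : Pt n → ℝ) : Prop :=
  ∀ x : Pt n, inCube x → A x ∈ Set.Icc (0:ℝ) 1

/-- Condition S: all discontinuities of all sections of `A` lie in the
countable set `S`. -/
def CondS {n : ℕ} (A : Pt n → ℝ) (S : Set ℝ) : Prop :=
  ∀ u : Pt n, inCube u → ∀ i : Fin n, ∀ t ∈ Set.Icc (0:ℝ) 1, t ∉ S →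
    ContinuousWithinAt (fun s => A (Function.update u i s)) (Set.Icc (0:ℝ) 1) t

/-- A quasi-copula: a semicopula that is 1-Lipschitz w.r.t. the ℓ¹-norm. -/
def QuasiCopula {n : ℕ} (A : Pt n → ℝ) : Prop :=
  Semicopula A ∧ ∀ x y : Pt n, inCube x → inCube y → |A x - A y| ≤ ∑ i, |x i - y i|

end KIncr

/-!
The vertices of a `k`-box with multiplicity `1` correspond to the even subsets of its `k`
active coordinates, so there are `2^(k-1)` of them. If `C = B` at all of them, then
`L_k^{(C,B)}({Q}) = V_{C,k}(Q) < 0`, contradicting `L_k ≥ 0`; so `s ≥ 1` of them satisfy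
`C < B`, and we enumerate those first. Such a vertex `x` is not a vertex of `I^n`, so one of its
coordinates lies in `(0,1)`; moving it and `k - 1` other coordinates to `0` or `1` gives a point
`t` of the mesh, and the `k`-box spanned by `x` and `t` has `x` as a vertex of multiplicity `-1`
once the first coordinate is moved in the right direction. So `P⁻(x)` is an infimum over a
nonempty set, and `γ(x) = 0` together with `C(x) < B(x)` forces `P⁻(x) = 0`, which yields the
required `DU`.
-/

open Finset

theorem Finset.exists_fin_enum_filter_first {α : Type*} (P : Finset α) (p : α → Prop)
    [DecidablePred p] {N : ℕ} (hN : #P = N) :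
    ∃ x : Fin N → α, Function.Injective x ∧ (∀ i, x i ∈ P) ∧ (∀ u ∈ P, ∃ i, x i = u) ∧
      ∀ i, p (x i) ↔ (i : ℕ) < #(P.filter p) := by
  set G := P.filter p
  set H := P.filter (¬ p ·)
  have hGH : N = #G + #H := by rw [← hN, card_filter_add_card_filter_not]
  let g : Fin #G → α := fun i => G.equivFin.symm i
  let h : Fin #H → α := fun j => H.equivFin.symm j
  have hg : ∀ i, g i ∈ G := fun i => (G.equivFin.symm i).2
  have hh : ∀ j, h j ∈ H := fun j => (H.equivFin.symm j).2
  have hx : ∀ j : Fin (#G + #H),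
      Fin.append g h j ∈ P ∧ (p (Fin.append g h j) ↔ (j : ℕ) < #G) := by
    refine Fin.addCases (fun i => ?_) (fun j => ?_)
    · simpa [Fin.append_left] using (mem_filter.1 (hg i))
    · simpa [Fin.append_right] using (mem_filter.1 (hh j))
  refine ⟨Fin.append g h ∘ Fin.cast hGH, ?_, fun i => (hx _).1, fun u hu => ?_,
    fun i => (hx _).2⟩
  · refine (Fin.append_injective_iff.2 ⟨?_, ?_, ?_⟩).comp (Fin.cast_injective hGH)
    · exact fun i j hij => G.equivFin.symm.injective (Subtype.ext hij)
    · exact fun i j hij => H.equivFin.symm.injective (Subtype.ext hij)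
    · exact fun i j hij => (mem_filter.1 (hh j)).2 (hij ▸ (mem_filter.1 (hg i)).2)
  · by_cases hpu : p u
    · refine ⟨Fin.cast hGH.symm (Fin.castAdd _ (G.equivFin ⟨u, mem_filter.2 ⟨hu, hpu⟩⟩)), ?_⟩
      simp [g]
    · refine ⟨Fin.cast hGH.symm (Fin.natAdd _ (H.equivFin ⟨u, mem_filter.2 ⟨hu, hpu⟩⟩)), ?_⟩
      simp [h]

theorem Finset.card_powerset_filter_even {α : Type*} {K : Finset α} (hK : K.Nonempty) :
    #(K.powerset.filter fun T => Even #T) = 2 ^ (#K - 1) := by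
  have hsum := sum_powerset_neg_one_pow_card_of_nonempty hK
  rw [← sum_filter_add_sum_filter_not _ (fun T => Even #T),
    sum_congr rfl fun T hT => (mem_filter.1 hT).2.neg_one_pow,
    sum_congr rfl fun T hT => (Nat.not_even_iff_odd.1 (mem_filter.1 hT).2).neg_one_pow] at hsum
  have htot := card_filter_add_card_filter_not (s := K.powerset) (fun T => Even #T)
  obtain ⟨m, hm⟩ := Nat.exists_eq_succ_of_ne_zero (card_pos.2 hK).ne'
  rw [card_powerset, hm, pow_succ] at htot
  rw [hm, Nat.succ_sub_one]
  simp only [sum_const, smul_neg, nsmul_eq_mul, mul_one] at hsum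
  omega

namespace KIncr

variable {n k : ℕ}

namespace Box

variable {R : Box n} {u : Pt n}

lemma isVertex_of_mem_vertices (h : u ∈ R.vertices) : R.IsVertex u := by
  obtain ⟨ε, -, rfl⟩ := mem_image.1 h
  intro i
  by_cases hε : ε i <;> simp [hε]

lemma mult_of_isVertex (h : R.IsVertex u) : R.mult k u = R.sign k u := if_pos h

noncomputable def activeCoords (R : Box n) : Finset (Fin n) := {i | R.lo i < R.hi i}

lemma mem_activeCoords {i : Fin n} : i ∈ R.activeCoords ↔ R.lo i < R.hi i := by
  simp [activeCoords]

lemma card_activeCoords (hR : R.IsKBox k) : #R.activeCoords = k := hR.2.2.2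

lemma sign_eq_neg_one_pow (hR : R.IsKBox k) (hu : R.IsVertex u) :
    R.sign k u = (-1) ^ #{i ∈ R.activeCoords | u i = R.lo i} := by
  have hdeg : #{i | ¬ R.lo i < R.hi i} = n - k := by
    have := card_filter_add_card_filter_not (s := univ) (fun i => R.lo i < R.hi i)
    rw [card_univ, Fintype.card_fin, ← activeCoords, card_activeCoords hR] at this
    omega
  have hlo : #{i | u i = R.lo i} = #{i ∈ R.activeCoords | u i = R.lo i} + (n - k) := by
    rw [← hdeg, ← card_filter_add_card_filter_not (s := {i | u i = R.lo i})
      (fun i => R.lo i < R.hi i), activeCoords, filter_filter, filter_filter, filter_filter]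
    congr 2
    · exact filter_congr fun i _ => and_comm
    · refine filter_congr fun i _ => and_iff_right_of_imp fun h => ?_
      exact (hu i).elim id fun hhi => hhi.trans (le_antisymm (hR.2.2.1 i) (not_lt.1 h)).symm
  rw [Box.sign, hlo, add_assoc, pow_add, Even.neg_one_pow ⟨_, rfl⟩, mul_one]

lemma sign_eq_one_or_neg_one (u : Pt n) : R.sign k u = 1 ∨ R.sign k u = -1 :=
  neg_one_pow_eq_or ℤ _

noncomputable def corner (R : Box n) (T : Finset (Fin n)) : Pt n :=
  fun i => if i ∈ T then R.lo i else R.hi i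

lemma isVertex_corner (T : Finset (Fin n)) : R.IsVertex (R.corner T) := by
  intro i
  by_cases h : i ∈ T <;> simp [corner, h]

lemma corner_mem_vertices (T : Finset (Fin n)) : R.corner T ∈ R.vertices :=
  mem_image.2 ⟨fun i => decide (i ∉ T), mem_univ _, funext fun i => by
    by_cases h : i ∈ T <;> simp [corner, h]⟩

lemma exists_corner_eq (hle : ∀ i, R.lo i ≤ R.hi i) (hu : u ∈ R.vertices) :
    ∃ T ⊆ R.activeCoords, R.corner T = u := by
  refine ⟨{i ∈ R.activeCoords | u i = R.lo i}, filter_subset _ _, funext fun i => ?_⟩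
  rcases isVertex_of_mem_vertices hu i with h | h <;> by_cases hlt : R.lo i < R.hi i <;>
    simp [corner, mem_activeCoords, h, hlt] <;> grind

lemma corner_injOn : Set.InjOn R.corner {T | T ⊆ R.activeCoords} := by
  intro S hS T hT hST
  ext i
  have hi := congrFun hST i
  by_cases hiS : i ∈ S <;> by_cases hiT : i ∈ T <;> simp_all [corner]
  · exact (mem_activeCoords.1 (hS hiS)).ne hi
  · exact (mem_activeCoords.1 (hT hiT)).ne' hi

lemma mult_corner (hR : R.IsKBox k) {T : Finset (Fin n)} (hT : T ⊆ R.activeCoords) :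
    R.mult k (R.corner T) = (-1) ^ #T := by
  rw [mult_of_isVertex (isVertex_corner T), sign_eq_neg_one_pow hR (isVertex_corner T)]
  congr 2
  ext i
  by_cases hi : i ∈ T
  · simp [corner, hi, hT hi]
  · simpa [corner, hi] using fun h => (mem_activeCoords.1 h).ne'

lemma card_filter_mult_eq_one (hR : R.IsKBox k) (hk : 1 ≤ k) :
    #{u ∈ R.vertices | R.mult k u = 1} = 2 ^ (k - 1) := by
  have himage : {u ∈ R.vertices | R.mult k u = 1} =
      (R.activeCoords.powerset.filter fun T => Even #T).image R.corner := by
    ext u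
    simp only [mem_filter, mem_image, mem_powerset]
    constructor
    · rintro ⟨hu, hm⟩
      obtain ⟨T, hT, rfl⟩ := exists_corner_eq hR.2.2.1 hu
      rw [mult_corner hR hT, neg_one_pow_eq_one_iff_even (by decide)] at hm
      exact ⟨T, ⟨hT, hm⟩, rfl⟩
    · rintro ⟨T, ⟨hT, heven⟩, rfl⟩
      exact ⟨corner_mem_vertices T, by rw [mult_corner hR hT, heven.neg_one_pow]⟩
  have hK : R.activeCoords.Nonempty := card_pos.1 (by rw [card_activeCoords hR]; omega)
  rw [himage, card_image_of_injOn fun S hS T hT =>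
      corner_injOn (mem_powerset.1 (mem_filter.1 hS).1) (mem_powerset.1 (mem_filter.1 hT).1),
    card_powerset_filter_even hK, card_activeCoords hR]

def ofCorners (u t : Pt n) : Box n := ⟨u ⊓ t, u ⊔ t⟩

variable {t : Pt n}

lemma isVertex_ofCorners_left : (ofCorners u t).IsVertex u := fun i =>
  (le_total (u i) (t i)).imp (fun h => (inf_eq_left.2 h).symm) fun h => (sup_eq_left.2 h).symm

lemma mem_of_mem_vertices_ofCorners {δ : Fin n → Set ℝ} (hu : ∀ i, u i ∈ δ i)
    (ht : ∀ i, t i ∈ δ i) {w : Pt n} (hw : w ∈ (ofCorners u t).vertices) (i : Fin n) :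
    w i ∈ δ i := by
  rcases isVertex_of_mem_vertices hw i with h | h <;> rw [h]
  · change min (u i) (t i) ∈ δ i
    rcases min_choice (u i) (t i) with h | h <;> simp only [h, hu, ht]
  · change max (u i) (t i) ∈ δ i
    rcases max_choice (u i) (t i) with h | h <;> simp only [h, hu, ht]

lemma isKBox_ofCorners (hu : inCube u) (ht : inCube t) :
    (ofCorners u t).IsKBox #{i | u i ≠ t i} := by
  refine ⟨fun i => ⟨le_min (hu i).1 (ht i).1, min_le_of_left_le (hu i).2⟩,
    fun i => ⟨le_max_of_le_left (hu i).1, max_le (hu i).2 (ht i).2⟩,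
    fun i => inf_le_sup, ?_⟩
  exact congrArg card (filter_congr fun i _ => min_lt_max)

lemma mult_ofCorners_left (hu : inCube u) (ht : inCube t) :
    (ofCorners u t).mult #{i | u i ≠ t i} u = (-1) ^ #{i | u i < t i} := by
  rw [mult_of_isVertex isVertex_ofCorners_left,
    sign_eq_neg_one_pow (isKBox_ofCorners hu ht) isVertex_ofCorners_left, activeCoords,
    filter_filter]
  refine congrArg (fun T => (-1) ^ #T) (filter_congr fun i _ => ?_)
  simp only [ofCorners, Pi.inf_apply, Pi.sup_apply, min_lt_max, left_eq_inf]
  exact ⟨fun h => lt_of_le_of_ne h.2 h.1, fun h => ⟨h.ne, h.le⟩⟩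

end Box

lemma multDU_singleton (R : Box n) (u : Pt n) : multDU k {R} u = R.mult k u := by
  rw [multDU, Multiset.map_singleton, Multiset.sum_singleton]

lemma exists_card_ne_eq_odd_card_lt (hk1 : 1 ≤ k) (hkn : k ≤ n) (u : Pt n) {i₀ : Fin n}
    (h0 : 0 < u i₀) (h1 : u i₀ < 1) :
    ∃ t : Pt n, (∀ i, t i = u i ∨ t i = 0 ∨ t i = 1) ∧
      #{i | u i ≠ t i} = k ∧ Odd #{i | u i < t i} := by
  obtain ⟨K, hK, hKcard⟩ := exists_subset_card_eq (s := univ.erase i₀) (n := k - 1) (by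
    rw [card_erase_of_mem (mem_univ _), card_univ, Fintype.card_fin]; omega)
  have hi₀K : i₀ ∉ K := fun h => (mem_erase.1 (hK h)).1 rfl
  let t (c : ℝ) : Pt n := fun i =>
    if i = i₀ then c else if i ∈ K then (if u i < 1 then 1 else 0) else u i
  have hvals : ∀ c, c = 0 ∨ c = 1 → ∀ i, t c i = u i ∨ t c i = 0 ∨ t c i = 1 := by
    intro c hc i
    simp only [t]
    split_ifs <;> simp_all
  have hne : ∀ c, c = 0 ∨ c = 1 → #{i | u i ≠ t c i} = k := by
    intro c hc
    have : ({i | u i ≠ t c i} : Finset (Fin n)) = insert i₀ K := by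
      ext i
      simp only [mem_filter, mem_univ, true_and, mem_insert, t]
      split_ifs <;> grind
    rw [this, card_insert_of_notMem hi₀K, hKcard]
    omega
  have hlt : ({i | u i < t 1 i} : Finset (Fin n)) =
      insert i₀ ({i | u i < t 0 i} : Finset (Fin n)) := by
    ext i
    simp only [mem_filter, mem_univ, true_and, mem_insert, t]
    split_ifs <;> grind
  have hi₀ : i₀ ∉ ({i | u i < t 0 i} : Finset (Fin n)) := by simp [t, h0.le]
  rcases Nat.even_or_odd #{i | u i < t 0 i} with heven | hodd
  · refine ⟨t 1, hvals 1 (Or.inr rfl), hne 1 (Or.inr rfl), ?_⟩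
    rw [hlt, card_insert_of_notMem hi₀]
    exact heven.add_one
  · exact ⟨t 0, hvals 0 (Or.inl rfl), hne 0 (Or.inl rfl), hodd⟩

lemma IsMesh.exists_memRk_multDU_neg {D : Set (Pt n)} (hD : IsMesh D) (hk1 : 1 ≤ k)
    (hkn : k ≤ n) {u : Pt n} (hu : u ∈ D) (hnv : ¬ isCubeVertex u) :
    ∃ DU : Multiset (Box n), memRk k D DU ∧ multDU k DU u < 0 := by
  obtain ⟨δ, hδ, rfl⟩ := hD
  have hcube : ∀ {w : Pt n}, (∀ i, w i ∈ δ i) → inCube w := fun hw i => (hδ i).1 (hw i)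
  obtain ⟨i₀, hne0, hne1⟩ : ∃ i₀, u i₀ ≠ 0 ∧ u i₀ ≠ 1 := by
    simpa [isCubeVertex] using hnv
  obtain ⟨t, htval, hcard, hodd⟩ := exists_card_ne_eq_odd_card_lt hk1 hkn u
    (lt_of_le_of_ne (hcube hu i₀).1 hne0.symm) (lt_of_le_of_ne (hcube hu i₀).2 hne1)
  have ht : ∀ i, t i ∈ δ i := fun i => by
    rcases htval i with h | h | h <;> rw [h]
    exacts [hu i, (hδ i).2.2.2.2.1, (hδ i).2.2.2.2.2]
  refine ⟨{Box.ofCorners u t}, fun R hR => ?_, ?_⟩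
  · rw [Multiset.mem_singleton.1 hR, ← hcard]
    exact ⟨Box.isKBox_ofCorners (hcube hu) (hcube ht),
      fun w hw => Box.mem_of_mem_vertices_ofCorners hu ht hw⟩
  · rw [multDU_singleton, ← hcard,
      Box.mult_ofCorners_left (hcube hu) (hcube ht), hodd.neg_one_pow]
    norm_num

lemma Lk_singleton {A B : Pt n → ℝ} {R : Box n}
    (hAB : ∀ u ∈ R.vertices, R.mult k u = 1 → A u = B u) :
    Lk k A B {R} = Vvol k A R := by
  rw [Lk, Vvol, Multiset.toFinset_singleton, singleton_biUnion]
  refine sum_congr rfl fun u hu => ?_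
  have hmult := Box.mult_of_isVertex (k := k) (Box.isVertex_of_mem_vertices hu)
  rw [multDU_singleton, hmult]
  rcases Box.sign_eq_one_or_neg_one (k := k) (R := R) u with h | h
  · rw [h, hAB u hu (hmult.trans h)]
    norm_num
  · rw [h]
    norm_num

lemma Pneg_eq_zero_of_gammaK_eq_zero {D : Set (Pt n)} {A B : Pt n → ℝ} {x : Pt n}
    (hγ : gammaK k D A B x = 0) (hlt : A x < B x) : Pneg k D A B x = 0 :=
  (min_eq_iff.1 hγ).elim And.left fun h => absurd h.1 (sub_pos.2 hlt).ne'

lemma exists_lt_of_Pneg_eq_zero {D : Set (Pt n)} {A B : Pt n → ℝ} {x : Pt n}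
    (hP : Pneg k D A B x = 0) (hne : ∃ DU, memRk k D DU ∧ multDU k DU x < 0)
    {ε : ℝ} (hε : 0 < ε) :
    ∃ DU, memRk k D DU ∧ multDU k DU x < 0 ∧ Lk k A B DU / |(multDU k DU x : ℝ)| < ε := by
  obtain ⟨DU, hDU, hneg⟩ := hne
  by_contra! hge
  have : ε ≤ Pneg k D A B x :=
    le_csInf ⟨_, DU, hDU, hneg, rfl⟩ fun _ ⟨DU', hDU', hneg', hr⟩ => hr ▸ hge DU' hDU' hneg'
  linarith

end KIncr

open KIncr

theorem stmt7_general (n k : ℕ) (hk1 : 1 ≤ k) (hkn : k ≤ n)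
    (D : Set (Pt n)) (hD : IsMesh D) (B C : Pt n → ℝ)
    (hCB : ∀ u ∈ D, C u ≤ B u)
    (hL : ∀ DU : Multiset (Box n), memRk k D DU → 0 ≤ Lk k C B DU)
    (hgamma : ∀ d ∈ D, gammaK k D C B d = 0)
    (hvert : ∀ w : Pt n, isCubeVertex w → C w = B w)
    (Q : Box n) (hQ : Q.IsKBox k) (hQD : ∀ w ∈ Q.vertices, w ∈ D)
    (v : ℝ) (hv : Vvol k C Q = v) (hvneg : v < 0) :
    ∃ s : ℕ, 1 ≤ s ∧ s ≤ 2 ^ (k - 1) ∧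
      ∃ x : Fin (2 ^ (k - 1)) → Pt n, Function.Injective x ∧
        (∀ i, x i ∈ Q.vertices ∧ Q.mult k (x i) = 1) ∧
        (∀ u ∈ Q.vertices, Q.mult k u = 1 → ∃ i, x i = u) ∧
        (∀ i : Fin (2 ^ (k - 1)), (i : ℕ) < s →
          C (x i) < B (x i) ∧
          ∃ DU : Multiset (Box n), memRk k D DU ∧ multDU k DU (x i) < 0 ∧
            Lk k C B DU / |(multDU k DU (x i) : ℝ)| < |v| / (s : ℝ)) ∧
        (∀ i : Fin (2 ^ (k - 1)), s ≤ (i : ℕ) → C (x i) = B (x i)) := by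
  set P := Q.vertices.filter fun u => Q.mult k u = 1
  set s := #(P.filter fun u => C u < B u)
  have hPD : ∀ u ∈ P, u ∈ D := fun u hu => hQD u (mem_filter.1 hu).1
  have hs : 1 ≤ s := by
    refine card_pos.2 (nonempty_iff_ne_empty.2 fun hempty => ?_)
    rw [filter_eq_empty_iff] at hempty
    have hLQ := hL {Q} fun R hR => Multiset.mem_singleton.1 hR ▸ ⟨hQ, hQD⟩
    rw [Lk_singleton fun u hu hm => ?_, hv] at hLQ
    · linarith
    have huP : u ∈ P := mem_filter.2 ⟨hu, hm⟩
    exact le_antisymm (hCB u (hPD u huP)) (not_lt.1 (hempty huP))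
  obtain ⟨x, hx_inj, hxP, hPx, hx_lt⟩ :=
    P.exists_fin_enum_filter_first (fun u => C u < B u) (Box.card_filter_mult_eq_one hQ hk1)
  refine ⟨s, hs, (card_filter_le _ _).trans (Box.card_filter_mult_eq_one hQ hk1).le, x, hx_inj,
    fun i => mem_filter.1 (hxP i), fun u hu hm => hPx u (mem_filter.2 ⟨hu, hm⟩),
    fun i hi => ?_, fun i hi => ?_⟩
  · have hlt : C (x i) < B (x i) := (hx_lt i).2 hi
    have hxD : x i ∈ D := hPD _ (hxP i)
    refine ⟨hlt, exists_lt_of_Pneg_eq_zero (Pneg_eq_zero_of_gammaK_eq_zero (hgamma _ hxD) hlt)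
      (hD.exists_memRk_multDU_neg hk1 hkn hxD fun hcv => hlt.ne (hvert _ hcv))
      (div_pos (abs_pos.2 hvneg.ne) (Nat.cast_pos.2 hs))⟩
  · exact le_antisymm (hCB _ (hPD _ (hxP i))) (not_lt.1 fun hlt => ((hx_lt i).1 hlt).not_ge hi)

/-- Lemma 4.3: if `k`-increasingness of `C` fails on a `k`-box,
the positive-multiplicity vertices where `C < B` admit cheap disjoint unions. -/
theorem stmt7 (n k : ℕ) (hn : 1 ≤ n) (hk1 : 1 ≤ k) (hkn : k ≤ n)
    (D : Set (Pt n)) (hD : IsMesh D) (B C : Pt n → ℝ)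
    (hCI : ∀ u ∈ D, C u ∈ Set.Icc (0:ℝ) 1) (hBI : ∀ u ∈ D, B u ∈ Set.Icc (0:ℝ) 1)
    (hCB : ∀ u ∈ D, C u ≤ B u)
    (hL : ∀ DU : Multiset (Box n), memRk k D DU → 0 ≤ Lk k C B DU)
    (hgamma : ∀ d ∈ D, gammaK k D C B d = 0)
    (hvert : ∀ w : Pt n, isCubeVertex w → C w = B w)
    (Q : Box n) (hQ : Q.IsKBox k) (hQD : ∀ w ∈ Q.vertices, w ∈ D)
    (v : ℝ) (hv : Vvol k C Q = v) (hvneg : v < 0) :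
    ∃ s : ℕ, 1 ≤ s ∧ s ≤ 2 ^ (k - 1) ∧
      ∃ x : Fin (2 ^ (k - 1)) → Pt n, Function.Injective x ∧
        (∀ i, x i ∈ Q.vertices ∧ Q.mult k (x i) = 1) ∧
        (∀ u ∈ Q.vertices, Q.mult k u = 1 → ∃ i, x i = u) ∧
        (∀ i : Fin (2 ^ (k - 1)), (i : ℕ) < s →
          C (x i) < B (x i) ∧
          ∃ DU : Multiset (Box n), memRk k D DU ∧ multDU k DU (x i) < 0 ∧
            Lk k C B DU / |(multDU k DU (x i) : ℝ)| < |v| / (s : ℝ)) ∧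
        (∀ i : Fin (2 ^ (k - 1)), s ≤ (i : ℕ) → C (x i) = B (x i)) :=
  stmt7_general n k hk1 hkn D hD B C hCB hL hgamma hvert Q hQ hQD v hv hvneg
end

section
/- Let D be a dense countably infinite mesh in I^n and fix an integer k with 1 ≤ k ≤ n. Let B, C : D → I be functions with C ≤ B, L_k^{(C,B)}(DU) ≥ 0 for all DU ∈ R_k(D), and γ_{k,D}^{(C,B)}(d) = 0 for all d ∈ D. Assume C(v) = B(v) for all vertices v of the unit cube I^n, and that there exists a k-box Q with vertices in D such that V_{C,k}(Q) = v < 0, with vertices x_1,…,x_s (s ∈ {1,…,2^{k−1}}) satisfying m_Q(x_i) = 1 and C(x_i) < B(x_i) for all i ∈ {1,…,s}, while C(x) = B(x) for every other vertex x of Q with m_Q(x) = 1. Assume further that for each i ∈ {1,…,s} we are given DU_i ∈ R_k(D) with m_{DU_i}(x_i) < 0 and L_k^{(C,B)}(DU_i) < |m_{DU_i}(x_i)|·|v|/s. Set m = ∏_{l=1}^s |m_{DU_l}(x_l)| and m_i = m/|m_{DU_i}(x_i)|, and define the multisets Ŕ (m copies of Q together with m_l copies of every box of DU_l for each l ∈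 {1,…,s}) and, for each i ∈ {1,…,s}, Ŕ_i (m copies of Q together with m_l copies of every box of DU_l for each l ∈ {1,…,s}\{i}). Then: (i) for each i ∈ {1,…,s}, L_k^{(C,B)}(Ŕ_i) ≤ m·(B(x_i) − C(x_i)) + m·V_{C,k}(Q) + Σ_{l∈{1,…,s}\{i}} m_l·L_k^{(C,B)}(DU_l); (ii) L_k^{(C,B)}(Ŕ) ≤ m·V_{C,k}(Q) + Σ_{l=1}^s m_l·L_k^{(C,B)}(DU_l). -/
open scoped Classical BigOperators

/-! `L_k^{(C,B)}(S) = ∑ᵤ m_S(u) C(u) + ∑ᵤ (B(u) - C(u)) m_S(u)⁺`: the first sum is additive in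
`S`, the second subadditive, as `(·)⁺` is. At each `x_j` the `M` copies of `Q` contribute
multiplicity `+M`, cancelled exactly by the `-M` of the `m_j` copies of `DU_j`. So the only excess
not accounted for by the `L_k(DU_l)` is `M (B(x_i) - C(x_i))`, at the vertex whose `DU_i` is left
out of `Ŕ_i`: at every other vertex of `Q` of multiplicity `1`, `B = C`. -/

theorem posPart_add_le {α : Type*} [AddCommGroup α] [Lattice α] [IsOrderedAddMonoid α]
    (a b : α) : (a + b)⁺ ≤ a⁺ + b⁺ :=
  sup_le (add_le_add (le_posPart a) (le_posPart b))
    (add_nonneg (posPart_nonneg a) (posPart_nonneg b))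

theorem posPart_sum_le {ι α : Type*} [AddCommGroup α] [Lattice α] [IsOrderedAddMonoid α]
    (T : Finset ι) (f : ι → α) : (∑ l ∈ T, f l)⁺ ≤ ∑ l ∈ T, (f l)⁺ :=
  Finset.le_sum_of_subadditive _ (by simp) posPart_add_le T f

theorem Int.posPart_natCast_mul (c : ℕ) (m : ℤ) : ((c : ℤ) * m)⁺ = c * m⁺ := by
  rcases le_or_gt m 0 with h | h
  · rw [posPart_eq_zero.mpr h, mul_zero, posPart_eq_zero]
    exact mul_nonpos_of_nonneg_of_nonpos c.cast_nonneg h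
  · rw [posPart_eq_self.mpr h.le, posPart_eq_self]
    positivity

theorem Int.posPart_sum_natCast_mul_le {ι : Type*} (T : Finset ι) (c : ι → ℕ) (m : ι → ℤ) :
    (∑ l ∈ T, (c l : ℤ) * m l)⁺ ≤ ∑ l ∈ T, (c l : ℤ) * (m l)⁺ :=
  (posPart_sum_le T _).trans_eq (Finset.sum_congr rfl fun _ _ => Int.posPart_natCast_mul _ _)

namespace KIncr

variable {n k : ℕ}

section Multiplicity

theorem Box.mem_vertices {R : Box n} {u : Pt n} : u ∈ R.vertices ↔ R.IsVertex u := by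
  constructor
  · rintro hu
    obtain ⟨ε, -, rfl⟩ := Finset.mem_image.mp hu
    intro i
    by_cases h : ε i <;> simp [h]
  · intro h
    refine Finset.mem_image.mpr ⟨fun i => decide (u i = R.hi i), Finset.mem_univ _, ?_⟩
    funext i
    by_cases hi : u i = R.hi i
    · simp [hi]
    · have hlo := (h i).resolve_right hi
      rw [hlo] at hi
      simp [hlo, hi]

theorem Box.mult_of_mem_vertices {R : Box n} {u : Pt n} (h : u ∈ R.vertices) :
    R.mult k u = R.sign k u :=
  if_pos (Box.mem_vertices.mp h)

theorem Box.mult_of_notMem_vertices {R : Box n} {u : Pt n} (h : u ∉ R.vertices) :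
    R.mult k u = 0 :=
  if_neg (mt Box.mem_vertices.mpr h)

theorem Box.mem_vertices_of_mult_ne_zero {R : Box n} {u : Pt n} (h : R.mult k u ≠ 0) :
    u ∈ R.vertices :=
  not_not.mp (mt Box.mult_of_notMem_vertices h)

theorem Box.mult_eq_one_of_pos {R : Box n} {u : Pt n} (h : 0 < R.mult k u) :
    R.mult k u = 1 := by
  have hv := Box.mem_vertices_of_mult_ne_zero h.ne'
  rw [Box.mult_of_mem_vertices hv, Box.sign] at h ⊢
  rcases neg_one_pow_eq_or ℤ ((Finset.univ.filter (fun i => u i = R.lo i)).card + (n - k))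
    with h1 | h1
  · exact h1
  · rw [h1] at h
    exact absurd h (by decide)

theorem multDU_add (S T : Multiset (Box n)) (u : Pt n) :
    multDU k (S + T) u = multDU k S u + multDU k T u := by
  simp [multDU]

theorem multDU_nsmul (c : ℕ) (S : Multiset (Box n)) (u : Pt n) :
    multDU k (c • S) u = c * multDU k S u := by
  simp [multDU, Multiset.map_nsmul, Multiset.sum_nsmul]

theorem multDU_replicate (c : ℕ) (R : Box n) (u : Pt n) :
    multDU k (Multiset.replicate c R) u = c * R.mult k u := by
  simp [multDU]

theorem multDU_sum {ι : Type*} (T : Finset ι) (S : ι → Multiset (Box n)) (u : Pt n) :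
    multDU k (∑ l ∈ T, S l) u = ∑ l ∈ T, multDU k (S l) u :=
  map_sum ((Multiset.sumAddMonoidHom).comp (Multiset.mapAddMonoidHom (Box.mult k · u))) S T

theorem multDU_eq_zero {S : Multiset (Box n)} {u : Pt n} (h : ∀ R ∈ S, u ∉ R.vertices) :
    multDU k S u = 0 :=
  Multiset.sum_eq_zero fun _ hm => by
    obtain ⟨R, hR, rfl⟩ := Multiset.mem_map.mp hm
    exact Box.mult_of_notMem_vertices (h R hR)

theorem multDU_replicate_add_sum {ι : Type*} (M : ℕ) (Q : Box n) (T : Finset ι) (c : ι → ℕ)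
    (DU : ι → Multiset (Box n)) (u : Pt n) :
    multDU k (Multiset.replicate M Q + ∑ l ∈ T, c l • DU l) u =
      M * Q.mult k u + ∑ l ∈ T, (c l : ℤ) * multDU k (DU l) u := by
  simp only [multDU_add, multDU_replicate, multDU_sum, multDU_nsmul]

end Multiplicity

section Decomposition

variable (A B : Pt n → ℝ)

theorem Lk_eq_sum {S : Multiset (Box n)} {F : Finset (Pt n)} (hF : ∀ R ∈ S, R.vertices ⊆ F) :
    Lk k A B S =
      ∑ u ∈ F, ((multDU k S u : ℝ) * A u + (B u - A u) * ((multDU k S u)⁺ : ℤ)) := by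
  have hsupp : S.toFinset.biUnion Box.vertices ⊆ F := fun u hu => by
    obtain ⟨R, hR, hu⟩ := Finset.mem_biUnion.mp hu
    exact hF R (Multiset.mem_toFinset.mp hR) hu
  refine Finset.sum_subset_zero_on_sdiff hsupp (fun u hu => ?_) (fun u _ => ?_)
  · have h0 : multDU k S u = 0 := multDU_eq_zero fun R hR hv =>
      (Finset.mem_sdiff.mp hu).2 (Finset.mem_biUnion.mpr ⟨R, Multiset.mem_toFinset.mpr hR, hv⟩)
    simp [h0]
  · rcases lt_trichotomy (multDU k S u) 0 with h | h | h
    · simp [h, h.not_gt, posPart_eq_zero.mpr h.le]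
    · simp [h]
    · simp [h, posPart_eq_self.mpr h.le]
      ring

theorem Vvol_eq_sum {R : Box n} {F : Finset (Pt n)} (hF : R.vertices ⊆ F) :
    Vvol k A R = ∑ u ∈ F, (R.mult k u : ℝ) * A u :=
  Finset.sum_subset_zero_on_sdiff hF
    (fun u hu => by simp [Box.mult_of_notMem_vertices (Finset.mem_sdiff.mp hu).2])
    (fun u hu => by rw [Box.mult_of_mem_vertices hu])

end Decomposition

section Cancellation

variable {ι : Type*} {A B : Pt n → ℝ} {Q : Box n} {x : ι → Pt n} {DU : ι → Multiset (Box n)}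
  {c : ι → ℕ} {M : ℕ}

theorem excess_replicate_le [Fintype ι] [DecidableEq ι] {T : Finset ι} {u : Pt n}
    (hAB : A u ≤ B u) (hxT : ∀ j ∈ T, x j ≠ u)
    (hother : ∀ u ∈ Q.vertices, Q.mult k u = 1 → (∀ j, x j ≠ u) → A u = B u) :
    (B u - A u) * (((M : ℤ) * Q.mult k u)⁺ : ℤ) ≤
      ∑ j ∈ Tᶜ, (if x j = u then M * (B u - A u) else 0) := by
  have he : 0 ≤ B u - A u := sub_nonneg.mpr hAB
  have hind : 0 ≤ ∑ j ∈ Tᶜ, (if x j = u then M * (B u - A u) else 0) :=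
    Finset.sum_nonneg fun _ _ => by split_ifs; exacts [mul_nonneg M.cast_nonneg he, le_rfl]
  rcases le_or_gt (Q.mult k u) 0 with hle | hpos
  · rw [posPart_eq_zero.mpr (mul_nonpos_of_nonneg_of_nonpos M.cast_nonneg hle)]
    simpa using hind
  have h1 := Box.mult_eq_one_of_pos hpos
  rw [h1, mul_one, posPart_eq_self.mpr M.cast_nonneg]
  by_cases hxu : ∃ j, x j = u
  · obtain ⟨j, rfl⟩ := hxu
    have hj : j ∈ Tᶜ := Finset.mem_compl.mpr fun hj => hxT j hj rfl
    calc _ = if x j = x j then (M : ℝ) * (B (x j) - A (x j)) else 0 := by simp [mul_comm]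
      _ ≤ _ := Finset.single_le_sum
            (f := fun i => if x i = x j then (M : ℝ) * (B (x j) - A (x j)) else 0)
            (fun _ _ => by split_ifs; exacts [mul_nonneg M.cast_nonneg he, le_rfl]) hj
  · have hAB' := hother u (Box.mem_vertices_of_mult_ne_zero hpos.ne') h1 (not_exists.mp hxu)
    simp [hAB']

theorem posPart_mult_combined_le_of_cancel {T : Finset ι} {j : ι} (hj : j ∈ T)
    (hx : Q.mult k (x j) = 1) (hcancel : (c j : ℤ) * multDU k (DU j) (x j) = -M) :
    (M * Q.mult k (x j) + ∑ l ∈ T, (c l : ℤ) * multDU k (DU l) (x j))⁺ ≤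
      ∑ l ∈ T, (c l : ℤ) * (multDU k (DU l) (x j))⁺ := by
  have hsum : M * Q.mult k (x j) + ∑ l ∈ T, (c l : ℤ) * multDU k (DU l) (x j) =
      ∑ l ∈ T.erase j, (c l : ℤ) * multDU k (DU l) (x j) := by
    rw [← Finset.add_sum_erase T _ hj, hx, hcancel]
    ring
  rw [hsum]
  exact (Int.posPart_sum_natCast_mul_le _ _ _).trans <|
    Finset.sum_le_sum_of_subset_of_nonneg (T.erase_subset j) fun _ _ _ => by positivity

theorem excess_combined_le [Fintype ι] [DecidableEq ι] (T : Finset ι) {u : Pt n}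
    (hAB : A u ≤ B u)
    (hx : ∀ j, Q.mult k (x j) = 1)
    (hcancel : ∀ j, (c j : ℤ) * multDU k (DU j) (x j) = -M)
    (hother : ∀ u ∈ Q.vertices, Q.mult k u = 1 → (∀ j, x j ≠ u) → A u = B u) :
    (B u - A u) * ((M * Q.mult k u + ∑ l ∈ T, (c l : ℤ) * multDU k (DU l) u)⁺ : ℤ) ≤
      ∑ j ∈ Tᶜ, (if x j = u then M * (B u - A u) else 0) +
        ∑ l ∈ T, c l * ((B u - A u) * ((multDU k (DU l) u)⁺ : ℤ)) := by
  set e := B u - A u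
  have he : 0 ≤ e := sub_nonneg.mpr hAB
  have hind : 0 ≤ ∑ j ∈ Tᶜ, (if x j = u then M * e else 0) :=
    Finset.sum_nonneg fun _ _ => by split_ifs <;> positivity
  have hDUpart : ∑ l ∈ T, c l * (e * ((multDU k (DU l) u)⁺ : ℤ)) =
      e * ((∑ l ∈ T, (c l : ℤ) * (multDU k (DU l) u)⁺ : ℤ) : ℝ) := by
    push_cast
    rw [Finset.mul_sum]
    exact Finset.sum_congr rfl fun _ _ => by ring
  rw [hDUpart]
  by_cases hxT : ∃ j ∈ T, x j = u
  · obtain ⟨j, hj, rfl⟩ := hxT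
    calc _ ≤ e * ((∑ l ∈ T, (c l : ℤ) * (multDU k (DU l) (x j))⁺ : ℤ) : ℝ) :=
          mul_le_mul_of_nonneg_left
            (by exact_mod_cast posPart_mult_combined_le_of_cancel hj (hx j) (hcancel j)) he
      _ ≤ _ := le_add_of_nonneg_left hind
  have hQpart : e * (((M : ℤ) * Q.mult k u)⁺ : ℤ) ≤ ∑ j ∈ Tᶜ, (if x j = u then M * e else 0) :=
    excess_replicate_le hAB (fun j hj hju => hxT ⟨j, hj, hju⟩) hother
  have hsplit : (M * Q.mult k u + ∑ l ∈ T, (c l : ℤ) * multDU k (DU l) u)⁺ ≤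
      ((M : ℤ) * Q.mult k u)⁺ + ∑ l ∈ T, (c l : ℤ) * (multDU k (DU l) u)⁺ :=
    (posPart_add_le _ _).trans (add_le_add le_rfl (Int.posPart_sum_natCast_mul_le _ _ _))
  have hcast := mul_le_mul_of_nonneg_left (Int.cast_le (R := ℝ).mpr hsplit) he
  rw [Int.cast_add, mul_add] at hcast
  linarith

theorem Lk_summand_replicate_add_sum_le [Fintype ι] [DecidableEq ι] (T : Finset ι) {u : Pt n}
    (hAB : A u ≤ B u) (hx : ∀ j, Q.mult k (x j) = 1)
    (hcancel : ∀ j, (c j : ℤ) * multDU k (DU j) (x j) = -M)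
    (hother : ∀ u ∈ Q.vertices, Q.mult k u = 1 → (∀ j, x j ≠ u) → A u = B u) :
    (multDU k (Multiset.replicate M Q + ∑ l ∈ T, c l • DU l) u : ℝ) * A u +
        (B u - A u) * ((multDU k (Multiset.replicate M Q + ∑ l ∈ T, c l • DU l) u)⁺ : ℤ) ≤
      ∑ j ∈ Tᶜ, (if x j = u then M * (B u - A u) else 0) + M * (Q.mult k u * A u) +
        ∑ l ∈ T, c l *
          ((multDU k (DU l) u : ℝ) * A u + (B u - A u) * ((multDU k (DU l) u)⁺ : ℤ)) := by
  have hexcess := excess_combined_le T hAB hx hcancel hother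
  have hlin : ∑ l ∈ T, (c l : ℝ) * multDU k (DU l) u * A u =
      ∑ l ∈ T, (c l : ℝ) * (multDU k (DU l) u * A u) :=
    Finset.sum_congr rfl fun _ _ => mul_assoc _ _ _
  rw [multDU_replicate_add_sum]
  simp only [mul_add, Finset.sum_add_distrib]
  push_cast at hexcess ⊢
  rw [add_mul, Finset.sum_mul]
  linarith

theorem Lk_replicate_add_sum_le [Fintype ι] [DecidableEq ι] (T : Finset ι)
    (hQ : ∀ u ∈ Q.vertices, A u ≤ B u)
    (hDU : ∀ l, ∀ R ∈ DU l, ∀ u ∈ R.vertices, A u ≤ B u)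
    (hx : ∀ j, Q.mult k (x j) = 1)
    (hcancel : ∀ j, (c j : ℤ) * multDU k (DU j) (x j) = -M)
    (hother : ∀ u ∈ Q.vertices, Q.mult k u = 1 → (∀ j, x j ≠ u) → A u = B u) :
    Lk k A B (Multiset.replicate M Q + ∑ l ∈ T, c l • DU l) ≤
      ∑ j ∈ Tᶜ, M * (B (x j) - A (x j)) + M * Vvol k A Q +
        ∑ l ∈ T, c l * Lk k A B (DU l) := by
  set F := Q.vertices ∪ T.biUnion fun l => (DU l).toFinset.biUnion Box.vertices
  have hQF : Q.vertices ⊆ F := Finset.subset_union_left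
  have hDUF : ∀ l ∈ T, ∀ R ∈ DU l, R.vertices ⊆ F := fun l hl R hR u hu =>
    Finset.mem_union_right _ <| Finset.mem_biUnion.mpr
      ⟨l, hl, Finset.mem_biUnion.mpr ⟨R, Multiset.mem_toFinset.mpr hR, hu⟩⟩
  have hABF : ∀ u ∈ F, A u ≤ B u := fun u hu => by
    simp only [F, Finset.mem_union, Finset.mem_biUnion, Multiset.mem_toFinset] at hu
    rcases hu with hu | ⟨l, -, R, hR, hu⟩
    exacts [hQ u hu, hDU l R hR u hu]
  have hF : ∀ R ∈ Multiset.replicate M Q + ∑ l ∈ T, c l • DU l, R.vertices ⊆ F := by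
    intro R hR
    rcases Multiset.mem_add.mp hR with hR | hR
    · rw [(Multiset.mem_replicate.mp hR).2]
      exact hQF
    · obtain ⟨l, hl, hR⟩ := Multiset.mem_sum.mp hR
      exact hDUF l hl R (Multiset.mem_nsmul.mp hR).2
  have hind : ∑ j ∈ Tᶜ, M * (B (x j) - A (x j)) =
      ∑ u ∈ F, ∑ j ∈ Tᶜ, (if x j = u then M * (B u - A u) else 0) := by
    rw [Finset.sum_comm]
    refine Finset.sum_congr rfl fun j _ => ?_
    have hxj : x j ∈ Q.vertices :=
      Box.mem_vertices_of_mult_ne_zero (k := k) (by rw [hx j]; exact one_ne_zero)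
    rw [Finset.sum_ite_eq, if_pos (hQF hxj)]
  have hVQ : M * Vvol k A Q = ∑ u ∈ F, M * (Q.mult k u * A u) := by
    rw [Vvol_eq_sum A hQF, Finset.mul_sum]
  have hDUsum : ∑ l ∈ T, c l * Lk k A B (DU l) = ∑ u ∈ F, ∑ l ∈ T,
      c l * ((multDU k (DU l) u : ℝ) * A u + (B u - A u) * ((multDU k (DU l) u)⁺ : ℤ)) := by
    rw [Finset.sum_comm]
    exact Finset.sum_congr rfl fun l hl => by rw [Lk_eq_sum A B (hDUF l hl), Finset.mul_sum]
  rw [Lk_eq_sum A B hF, hVQ, hind, hDUsum, ← Finset.sum_add_distrib, ← Finset.sum_add_distrib]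
  exact Finset.sum_le_sum fun u hu =>
    Lk_summand_replicate_add_sum_le T (hABF u hu) hx hcancel hother

end Cancellation

end KIncr

open KIncr

theorem stmt8_general (n k : ℕ)
    (D : Set (Pt n)) (B C : Pt n → ℝ)
    (hCB : ∀ u ∈ D, C u ≤ B u)
    (Q : Box n) (hQD : ∀ w ∈ Q.vertices, w ∈ D)
    (v : ℝ)
    (s : ℕ)
    (x : Fin s → Pt n)
    (hxv : ∀ i, x i ∈ Q.vertices ∧ Q.mult k (x i) = 1 ∧ C (x i) < B (x i))
    (hother : ∀ u ∈ Q.vertices, Q.mult k u = 1 → (∀ i, x i ≠ u) → C u = B u)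
    (DU : Fin s → Multiset (Box n))
    (hDU : ∀ i, memRk k D (DU i) ∧ multDU k (DU i) (x i) < 0 ∧
      Lk k C B (DU i) < |(multDU k (DU i) (x i) : ℝ)| * |v| / (s : ℝ))
    (M : ℕ) (hM : M = ∏ l, (multDU k (DU l) (x l)).natAbs)
    (mi : Fin s → ℕ)
    (hmi : ∀ i, mi i = ∏ l ∈ Finset.univ.erase i, (multDU k (DU l) (x l)).natAbs)
    (Rhat : Multiset (Box n))
    (hRhat : Rhat = Multiset.replicate M Q + ∑ l, mi l • DU l)
    (Rhati : Fin s → Multiset (Box n))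
    (hRhati : ∀ i, Rhati i =
      Multiset.replicate M Q + ∑ l ∈ Finset.univ.erase i, mi l • DU l) :
    (∀ i, Lk k C B (Rhati i) ≤
        (M : ℝ) * (B (x i) - C (x i)) + (M : ℝ) * Vvol k C Q +
        ∑ l ∈ Finset.univ.erase i, (mi l : ℝ) * Lk k C B (DU l)) ∧
    Lk k C B Rhat ≤ (M : ℝ) * Vvol k C Q + ∑ l, (mi l : ℝ) * Lk k C B (DU l) := by
  have hcancel : ∀ j, (mi j : ℤ) * multDU k (DU j) (x j) = -M := by
    intro j
    have hMj : M = (multDU k (DU j) (x j)).natAbs * mi j := by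
      rw [hM, hmi]
      exact (Finset.mul_prod_erase _ (fun l => (multDU k (DU l) (x l)).natAbs)
        (Finset.mem_univ j)).symm
    rw [hMj, Nat.cast_mul, Int.natCast_natAbs, abs_of_neg (hDU j).2.1]
    ring
  have key (T : Finset (Fin s)) := Lk_replicate_add_sum_le T
    (fun u hu => hCB u (hQD u hu)) (fun l R hR u hu => hCB u (((hDU l).1 R hR).2 u hu))
    (fun j => (hxv j).2.1) hcancel hother
  refine ⟨fun i => ?_, ?_⟩
  · simpa [hRhati, Finset.compl_erase] using key (Finset.univ.erase i)
  · simpa [hRhat] using key Finset.univ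

/-- Proposition 4.4: upper bounds for `L_k^{(C,B)}` of the
combined disjoint unions `Ŕ` and `Ŕᵢ`. -/
theorem stmt8 (n k : ℕ) (hn : 1 ≤ n) (hk1 : 1 ≤ k) (hkn : k ≤ n)
    (D : Set (Pt n)) (hD : IsMesh D) (B C : Pt n → ℝ)
    (hCI : ∀ u ∈ D, C u ∈ Set.Icc (0:ℝ) 1) (hBI : ∀ u ∈ D, B u ∈ Set.Icc (0:ℝ) 1)
    (hCB : ∀ u ∈ D, C u ≤ B u)
    (hL : ∀ DU : Multiset (Box n), memRk k D DU → 0 ≤ Lk k C B DU)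
    (hgamma : ∀ d ∈ D, gammaK k D C B d = 0)
    (hvert : ∀ w : Pt n, isCubeVertex w → C w = B w)
    (Q : Box n) (hQ : Q.IsKBox k) (hQD : ∀ w ∈ Q.vertices, w ∈ D)
    (v : ℝ) (hv : Vvol k C Q = v) (hvneg : v < 0)
    (s : ℕ) (hs1 : 1 ≤ s) (hs2 : s ≤ 2 ^ (k - 1))
    (x : Fin s → Pt n) (hxinj : Function.Injective x)
    (hxv : ∀ i, x i ∈ Q.vertices ∧ Q.mult k (x i) = 1 ∧ C (x i) < B (x i))
    (hother : ∀ u ∈ Q.vertices, Q.mult k u = 1 → (∀ i, x i ≠ u) → C u = B u)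
    (DU : Fin s → Multiset (Box n))
    (hDU : ∀ i, memRk k D (DU i) ∧ multDU k (DU i) (x i) < 0 ∧
      Lk k C B (DU i) < |(multDU k (DU i) (x i) : ℝ)| * |v| / (s : ℝ))
    (M : ℕ) (hM : M = ∏ l, (multDU k (DU l) (x l)).natAbs)
    (mi : Fin s → ℕ)
    (hmi : ∀ i, mi i = ∏ l ∈ Finset.univ.erase i, (multDU k (DU l) (x l)).natAbs)
    (Rhat : Multiset (Box n))
    (hRhat : Rhat = Multiset.replicate M Q + ∑ l, mi l • DU l)
    (Rhati : Fin s → Multiset (Box n))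
    (hRhati : ∀ i, Rhati i =
      Multiset.replicate M Q + ∑ l ∈ Finset.univ.erase i, mi l • DU l) :
    (∀ i, Lk k C B (Rhati i) ≤
        (M : ℝ) * (B (x i) - C (x i)) + (M : ℝ) * Vvol k C Q +
        ∑ l ∈ Finset.univ.erase i, (mi l : ℝ) * Lk k C B (DU l)) ∧
    Lk k C B Rhat ≤ (M : ℝ) * Vvol k C Q + ∑ l, (mi l : ℝ) * Lk k C B (DU l) :=
  stmt8_general n k D B C hCB Q hQD v s x hxv hother DU hDU M hM mi hmi Rhat hRhat Rhati hRhati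
end

section
/- Let D be a dense countably infinite mesh in I^n and fix an integer k with 1 ≤ k ≤ n. Let A, B : D → I be functions with A ≤ B and L_k^{(A,B)}(DU) ≥ 0 for all DU ∈ R_k(D). Fix a point x ∈ D and define B' : D → I by B'(u) = B(u) for u ≠ x and B'(x) = B(x) − δ_{k,D}^{(A,B)}(x). Then A ≤ B' ≤ B, L_k^{(A,B')}(DU) ≥ 0 for all DU ∈ R_k(D), and δ_{k,D}^{(A,B')}(x) = 0. -/
open scoped Classical BigOperators

namespace KIncr

lemma mem_vertices_iff {n : ℕ} (R : Box n) (v : Pt n) :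
    v ∈ R.vertices ↔ R.IsVertex v := by
  constructor
  · intro h
    simp only [Box.vertices, Finset.mem_image, Finset.mem_univ, true_and] at h
    obtain ⟨ε, rfl⟩ := h
    intro i
    by_cases h : ε i <;> simp [h]
  · intro h
    simp only [Box.vertices, Finset.mem_image, Finset.mem_univ, true_and]
    refine ⟨fun i => if v i = R.hi i then true else false, ?_⟩
    funext i
    rcases h i with h1 | h1
    · by_cases h2 : v i = R.hi i
      · simp [h2]
      · simp [h2, h1]
        exact fun e => e.symm
    · simp [h1]

lemma mult_ne_mem_biUnion {n k : ℕ} (DU : Multiset (Box n)) (x : Pt n)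
    (h : multDU k DU x ≠ 0) : x ∈ DU.toFinset.biUnion Box.vertices := by
  by_contra hx
  apply h
  apply Multiset.sum_eq_zero
  intro z hz
  simp only [Multiset.mem_map] at hz
  obtain ⟨R, hR, rfl⟩ := hz
  rw [Box.mult, if_neg]
  intro hv
  exact hx (Finset.mem_biUnion.mpr ⟨R, Multiset.mem_toFinset.mpr hR,
    (mem_vertices_iff R x).mpr hv⟩)

lemma Lk_update {n k : ℕ} (A B : Pt n → ℝ) (x : Pt n) (d : ℝ) (B' : Pt n → ℝ)
    (hB' : ∀ u : Pt n, B' u = if u = x then B x - d else B u)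
    (DU : Multiset (Box n)) :
    Lk k A B' DU = Lk k A B DU -
      (if 0 < multDU k DU x then (multDU k DU x : ℝ) * d else 0) := by
  classical
  set F := DU.toFinset.biUnion Box.vertices with hF
  set g : Pt n → ℝ := fun u =>
    (if 0 < multDU k DU u then (multDU k DU u : ℝ) * B u
     else if multDU k DU u < 0 then (multDU k DU u : ℝ) * A u else 0) with hg
  set g' : Pt n → ℝ := fun u =>
    (if 0 < multDU k DU u then (multDU k DU u : ℝ) * B' u
     else if multDU k DU u < 0 then (multDU k DU u : ℝ) * A u else 0) with hg'
  have hLg : Lk k A B DU = ∑ u ∈ F, g u := rfl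
  have hLg' : Lk k A B' DU = ∑ u ∈ F, g' u := rfl
  by_cases hm : 0 < multDU k DU x
  · have hxF : x ∈ F := mult_ne_mem_biUnion DU x hm.ne'
    have key : ∑ u ∈ F, (g' u - g u) = g' x - g x := by
      apply Finset.sum_eq_single_of_mem x hxF
      intro u _ hne
      have hBu : B' u = B u := by rw [hB']; simp [hne]
      simp [hg, hg', hBu]
    rw [Finset.sum_sub_distrib, ← hLg, ← hLg'] at key
    have hgx : g' x - g x = -((multDU k DU x : ℝ) * d) := by
      have hBx : B' x = B x - d := by rw [hB']; simp
      simp only [hg, hg', if_pos hm, hBx]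
      ring
    rw [if_pos hm]
    linarith [key, hgx]
  · rw [if_neg hm, sub_zero, hLg, hLg']
    apply Finset.sum_congr rfl
    intro u _
    by_cases h1 : 0 < multDU k DU u
    · have hne : u ≠ x := by rintro rfl; exact hm h1
      have hBu : B' u = B u := by rw [hB']; simp [hne]
      simp [hg, hg', hBu]
    · simp [hg, hg', h1]

end KIncr

open KIncr
/-- Proposition 5.1: lowering `B` at a single point of a mesh. -/
theorem stmt10 (n k : ℕ) (hn : 1 ≤ n) (hk1 : 1 ≤ k) (hkn : k ≤ n)
    (D : Set (Pt n)) (hD : IsMesh D) (A B : Pt n → ℝ)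
    (hAI : ∀ u ∈ D, A u ∈ Set.Icc (0:ℝ) 1) (hBI : ∀ u ∈ D, B u ∈ Set.Icc (0:ℝ) 1)
    (hAB : ∀ u ∈ D, A u ≤ B u)
    (hL : ∀ DU : Multiset (Box n), memRk k D DU → 0 ≤ Lk k A B DU)
    (x : Pt n) (hx : x ∈ D) (B' : Pt n → ℝ)
    (hB' : ∀ u : Pt n, B' u = if u = x then B x - deltaK k D A B x else B u) :
    (∀ u ∈ D, A u ≤ B' u ∧ B' u ≤ B u) ∧
    (∀ DU : Multiset (Box n), memRk k D DU → 0 ≤ Lk k A B' DU) ∧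
    deltaK k D A B' x = 0 := by
  classical
  set δ : ℝ := deltaK k D A B x with hδdef
  set S : Set ℝ := {r : ℝ | ∃ DU : Multiset (Box n), memRk k D DU ∧
    0 < multDU k DU x ∧ r = Lk k A B DU / |(multDU k DU x : ℝ)|} with hSdef
  have hSnonneg : ∀ r ∈ S, (0:ℝ) ≤ r := by
    rintro r ⟨DU, hDU, hm, rfl⟩
    exact div_nonneg (hL DU hDU) (abs_nonneg _)
  have hSbdd : BddBelow S := ⟨0, hSnonneg⟩
  have hPposS : Ppos k D A B x = sInf S := rfl
  have hPposNonneg : 0 ≤ Ppos k D A B x := by rw [hPposS]; exact Real.sInf_nonneg hSnonneg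
  have hBA : 0 ≤ B x - A x := by linarith [hAB x hx]
  have hδnonneg : 0 ≤ δ := le_min hPposNonneg hBA
  have hδle : δ ≤ B x - A x := min_le_right _ _
  have hδlePpos : δ ≤ Ppos k D A B x := min_le_left _ _
  -- key inequality: for DU with positive multiplicity, m·δ ≤ Lk
  have hkey : ∀ DU : Multiset (Box n), memRk k D DU → 0 < multDU k DU x →
      (multDU k DU x : ℝ) * δ ≤ Lk k A B DU := by
    intro DU hDU hm
    have hmem : Lk k A B DU / |(multDU k DU x : ℝ)| ∈ S := ⟨DU, hDU, hm, rfl⟩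
    have h1 : δ ≤ Lk k A B DU / |(multDU k DU x : ℝ)| :=
      le_trans hδlePpos (by rw [hPposS]; exact csInf_le hSbdd hmem)
    have hmr : (0:ℝ) < (multDU k DU x : ℝ) := by exact_mod_cast hm
    have habs : |(multDU k DU x : ℝ)| = (multDU k DU x : ℝ) := abs_of_pos hmr
    rw [habs] at h1
    calc (multDU k DU x : ℝ) * δ ≤ (multDU k DU x : ℝ) * (Lk k A B DU / (multDU k DU x : ℝ)) :=
          by exact mul_le_mul_of_nonneg_left h1 hmr.le
      _ = Lk k A B DU := by field_simp
  have hL' : ∀ DU : Multiset (Box n), memRk k D DU → 0 ≤ Lk k A B' DU := by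
    intro DU hDU
    rw [Lk_update A B x δ B' hB' DU]
    by_cases hm : 0 < multDU k DU x
    · rw [if_pos hm]
      linarith [hkey DU hDU hm]
    · rw [if_neg hm, sub_zero]
      exact hL DU hDU
  refine ⟨?_, hL', ?_⟩
  · intro u hu
    rw [hB' u]
    rcases eq_or_ne u x with rfl | h
    · rw [if_pos rfl]
      exact ⟨by linarith, by linarith⟩
    · rw [if_neg h]
      exact ⟨hAB u hu, le_rfl⟩
  -- the main point: deltaK k D A B' x = 0
  · set S' : Set ℝ := {r : ℝ | ∃ DU : Multiset (Box n), memRk k D DU ∧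
      0 < multDU k DU x ∧ r = Lk k A B' DU / |(multDU k DU x : ℝ)|} with hS'def
    have hPpos'S : Ppos k D A B' x = sInf S' := rfl
    have hBx' : B' x = B x - δ := by rw [hB']; simp
    -- translation property
    have htrans : ∀ DU : Multiset (Box n), memRk k D DU → 0 < multDU k DU x →
        Lk k A B' DU / |(multDU k DU x : ℝ)| = Lk k A B DU / |(multDU k DU x : ℝ)| - δ := by
      intro DU hDU hm
      rw [Lk_update A B x δ B' hB' DU, if_pos hm]
      have hmr : (0:ℝ) < (multDU k DU x : ℝ) := by exact_mod_cast hm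
      rw [abs_of_pos hmr]
      field_simp
    have hPpos' : Ppos k D A B' x = Ppos k D A B x - δ := by
      by_cases hne : ∃ DU : Multiset (Box n), memRk k D DU ∧ 0 < multDU k DU x
      · obtain ⟨DU0, hDU0, hm0⟩ := hne
        have hSne : S.Nonempty := ⟨_, ⟨DU0, hDU0, hm0, rfl⟩⟩
        have hS'ne : S'.Nonempty := ⟨_, ⟨DU0, hDU0, hm0, rfl⟩⟩
        have hS'bdd : BddBelow S' := by
          refine ⟨-δ, ?_⟩
          rintro r ⟨DU, hDU, hm, rfl⟩
          rw [htrans DU hDU hm]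
          have := hSnonneg _ ⟨DU, hDU, hm, rfl⟩
          linarith
        rw [hPpos'S, hPposS]
        apply le_antisymm
        · have h3 : sInf S' + δ ≤ sInf S := by
            apply le_csInf hSne
            rintro r ⟨DU, hDU, hm, rfl⟩
            have hmem' : Lk k A B' DU / |(multDU k DU x : ℝ)| ∈ S' := ⟨DU, hDU, hm, rfl⟩
            have h2 := csInf_le hS'bdd hmem'
            rw [htrans DU hDU hm] at h2
            linarith
          linarith
        · apply le_csInf hS'ne
          rintro r ⟨DU, hDU, hm, rfl⟩
          have h2 := csInf_le hSbdd (⟨DU, hDU, hm, rfl⟩ : Lk k A B DU / |(multDU k DU x : ℝ)| ∈ S)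
          rw [htrans DU hDU hm]
          linarith
      · have hSe : S = ∅ := by
          ext r; simp only [hSdef, Set.mem_setOf_eq, Set.mem_empty_iff_false, iff_false]
          rintro ⟨DU, hDU, hm, _⟩; exact hne ⟨DU, hDU, hm⟩
        have hS'e : S' = ∅ := by
          ext r; simp only [hS'def, Set.mem_setOf_eq, Set.mem_empty_iff_false, iff_false]
          rintro ⟨DU, hDU, hm, _⟩; exact hne ⟨DU, hDU, hm⟩
        have hP0 : Ppos k D A B x = 0 := by rw [hPposS, hSe]; exact Real.sInf_empty
        have hδ0 : δ = 0 := le_antisymm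
          (le_trans (min_le_left _ _) (le_of_eq hP0)) hδnonneg
        rw [hPpos'S, hS'e, Real.sInf_empty, hP0, hδ0, sub_zero]
    have hmin : min (Ppos k D A B x - δ) ((B x - A x) - δ) = min (Ppos k D A B x) (B x - A x) - δ := by
      rcases le_total (Ppos k D A B x) (B x - A x) with h | h
      · rw [min_eq_left h, min_eq_left (by linarith)]
      · rw [min_eq_right h, min_eq_right (by linarith)]
    have : deltaK k D A B' x = min (Ppos k D A B x - δ) ((B x - A x) - δ) := by
      rw [deltaK, hPpos', hBx']
      ring_nf
    rw [this, hmin, ← deltaK, ← hδdef]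
    ring
end

section
/- Let D be a dense countably infinite mesh in I^n and fix an integer k with 1 ≤ k ≤ n. Let A, B : D → I be functions with A ≤ B and L_k^{(A,B)}(DU) ≥ 0 for all DU ∈ R_k(D). Then there exists a function C : D → I such that (i) A ≤ C ≤ B on D, (ii) δ_{k,D}^{(A,C)}(d) = 0 for all d ∈ D, and (iii) L_k^{(A,C)}(DU) ≥ 0 for all DU ∈ R_k(D). -/
open scoped Classical BigOperators

open KIncr

section AuxKIncr
open KIncr

variable {n k : ℕ} {D : Set (Pt n)}

lemma aux_isVertex_iff_mem {R : Box n} {u : Pt n} :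
    R.IsVertex u ↔ u ∈ R.vertices := by
  constructor
  · intro h
    refine Finset.mem_image.2 ⟨fun i => decide (u i = R.hi i), Finset.mem_univ _, ?_⟩
    funext i
    by_cases h2 : u i = R.hi i
    · simp [h2]
    · have h1 := (h i).resolve_right h2
      simp only [h1, decide_eq_true_eq]
      rw [if_neg (fun h3 : R.lo i = R.hi i => h2 (h1.trans h3))]
  · intro h
    obtain ⟨ε, -, rfl⟩ := Finset.mem_image.1 h
    intro i
    by_cases hε : ε i <;> simp [hε]

lemma aux_multDU_eq_zero {DU : Multiset (Box n)} {u : Pt n}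
    (h : u ∉ DU.toFinset.biUnion Box.vertices) : multDU k DU u = 0 := by
  unfold multDU
  apply Multiset.sum_eq_zero
  intro x hx
  obtain ⟨R, hR, rfl⟩ := Multiset.mem_map.1 hx
  unfold Box.mult
  rw [if_neg]
  intro hv
  exact h (Finset.mem_biUnion.2 ⟨R, Multiset.mem_toFinset.2 hR, aux_isVertex_iff_mem.1 hv⟩)

lemma aux_Lk_congr (A g g' : Pt n → ℝ) (DU : Multiset (Box n))
    (h : ∀ u ∈ DU.toFinset.biUnion Box.vertices, g u = g' u) :
    Lk k A g DU = Lk k A g' DU := by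
  unfold Lk
  refine Finset.sum_congr rfl fun u hu => ?_
  rw [h u hu]

lemma aux_Lk_mono (A g g' : Pt n → ℝ) (h : ∀ u, g' u ≤ g u) (DU : Multiset (Box n)) :
    Lk k A g' DU ≤ Lk k A g DU := by
  unfold Lk
  refine Finset.sum_le_sum fun u _ => ?_
  by_cases h1 : 0 < multDU k DU u
  · rw [if_pos h1, if_pos h1]
    exact mul_le_mul_of_nonneg_left (h u) (by exact_mod_cast h1.le)
  · rw [if_neg h1, if_neg h1]

lemma aux_Lk_update (A g g' : Pt n → ℝ) (d : Pt n) (hgg : ∀ u, u ≠ d → g' u = g u)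
    (DU : Multiset (Box n)) :
    Lk k A g' DU = Lk k A g DU -
      (if 0 < multDU k DU d then (multDU k DU d : ℝ) * (g d - g' d) else 0) := by
  classical
  unfold Lk
  set F := DU.toFinset.biUnion Box.vertices with hF
  have hterm : ∀ u ∈ F.erase d,
      (if 0 < multDU k DU u then (multDU k DU u : ℝ) * g' u
        else if multDU k DU u < 0 then (multDU k DU u : ℝ) * A u else 0)
      = (if 0 < multDU k DU u then (multDU k DU u : ℝ) * g u
        else if multDU k DU u < 0 then (multDU k DU u : ℝ) * A u else 0) := by
    intro u hu
    by_cases h1 : 0 < multDU k DU u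
    · rw [if_pos h1, if_pos h1, hgg u (Finset.ne_of_mem_erase hu)]
    · rw [if_neg h1, if_neg h1]
  by_cases hd : d ∈ F
  · rw [← Finset.add_sum_erase _ _ hd, ← Finset.add_sum_erase _ _ hd,
        Finset.sum_congr rfl hterm]
    by_cases h1 : 0 < multDU k DU d
    · rw [if_pos h1, if_pos h1, if_pos h1]
      ring
    · rw [if_neg h1, if_neg h1, if_neg h1, sub_zero]
  · have hm : multDU k DU d = 0 := aux_multDU_eq_zero hd
    rw [if_neg (by rw [hm]; exact lt_irrefl 0), sub_zero]
    refine Finset.sum_congr rfl fun u hu => ?_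
    have hud : u ≠ d := by rintro rfl; exact hd hu
    by_cases h1 : 0 < multDU k DU u
    · rw [if_pos h1, if_pos h1, hgg u hud]
    · rw [if_neg h1, if_neg h1]

lemma aux_Ppos_bdd (A g : Pt n → ℝ) (hg : ∀ DU, memRk k D DU → 0 ≤ Lk k A g DU) (x : Pt n) :
    BddBelow {r : ℝ | ∃ DU : Multiset (Box n), memRk k D DU ∧ 0 < multDU k DU x ∧
      r = Lk k A g DU / |(multDU k DU x : ℝ)|} := by
  refine ⟨0, ?_⟩
  rintro r ⟨DU, h1, h2, rfl⟩
  exact div_nonneg (hg DU h1) (abs_nonneg _)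

lemma aux_Ppos_nonneg (A g : Pt n → ℝ) (hg : ∀ DU, memRk k D DU → 0 ≤ Lk k A g DU) (x : Pt n) :
    0 ≤ Ppos k D A g x := by
  apply Real.sInf_nonneg
  rintro r ⟨DU, h1, h2, rfl⟩
  exact div_nonneg (hg DU h1) (abs_nonneg _)

lemma aux_Ppos_le (A g : Pt n → ℝ) (hg : ∀ DU, memRk k D DU → 0 ≤ Lk k A g DU) (x : Pt n)
    (DU : Multiset (Box n)) (h1 : memRk k D DU) (h2 : 0 < multDU k DU x) :
    Ppos k D A g x ≤ Lk k A g DU / |(multDU k DU x : ℝ)| :=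
  csInf_le (aux_Ppos_bdd A g hg x) ⟨DU, h1, h2, rfl⟩

lemma aux_Ppos_mono (A g g' : Pt n → ℝ) (hle : ∀ u, g' u ≤ g u)
    (hg : ∀ DU, memRk k D DU → 0 ≤ Lk k A g DU)
    (hg' : ∀ DU, memRk k D DU → 0 ≤ Lk k A g' DU) (x : Pt n) :
    Ppos k D A g' x ≤ Ppos k D A g x := by
  by_cases hne : ∃ DU : Multiset (Box n), memRk k D DU ∧ 0 < multDU k DU x
  · obtain ⟨DU0, hDU0, hm0⟩ := hne
    unfold Ppos
    have hSne : Set.Nonempty {r : ℝ | ∃ DU : Multiset (Box n), memRk k D DU ∧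
        0 < multDU k DU x ∧ r = Lk k A g DU / |(multDU k DU x : ℝ)|} :=
      ⟨_, ⟨DU0, hDU0, hm0, rfl⟩⟩
    apply le_csInf hSne
    rintro b ⟨DU, h1, h2, rfl⟩
    have habs : (0:ℝ) < |(multDU k DU x : ℝ)| := by
      rw [abs_pos]
      exact_mod_cast h2.ne'
    calc Ppos k D A g' x ≤ Lk k A g' DU / |(multDU k DU x : ℝ)| :=
          aux_Ppos_le A g' hg' x DU h1 h2
      _ ≤ Lk k A g DU / |(multDU k DU x : ℝ)| :=
          (div_le_div_iff_of_pos_right habs).2 (aux_Lk_mono A g g' hle DU)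
  · have he : ∀ g0 : Pt n → ℝ,
        {r : ℝ | ∃ DU : Multiset (Box n), memRk k D DU ∧ 0 < multDU k DU x ∧
          r = Lk k A g0 DU / |(multDU k DU x : ℝ)|} = ∅ := by
      intro g0
      ext r
      simp only [Set.mem_setOf_eq, Set.mem_empty_iff_false, iff_false]
      rintro ⟨DU, h1, h2, -⟩
      exact hne ⟨DU, h1, h2⟩
    unfold Ppos
    rw [he, he, Real.sInf_empty]

lemma aux_Ppos_exists_lt (A g : Pt n → ℝ) (x : Pt n)
    (hne : ∃ DU : Multiset (Box n), memRk k D DU ∧ 0 < multDU k DU x)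
    {ε : ℝ} (hε : 0 < ε) :
    ∃ DU : Multiset (Box n), memRk k D DU ∧ 0 < multDU k DU x ∧
      Lk k A g DU / |(multDU k DU x : ℝ)| < Ppos k D A g x + ε := by
  obtain ⟨DU0, h0, hm0⟩ := hne
  have hSne : Set.Nonempty {r : ℝ | ∃ DU : Multiset (Box n), memRk k D DU ∧
      0 < multDU k DU x ∧ r = Lk k A g DU / |(multDU k DU x : ℝ)|} :=
    ⟨_, DU0, h0, hm0, rfl⟩
  obtain ⟨a, ha, hlt⟩ := Real.lt_sInf_add_pos hSne hε
  obtain ⟨DU, h1, h2, rfl⟩ := ha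
  exact ⟨DU, h1, h2, hlt⟩

lemma aux_step (A g : Pt n → ℝ) (d : Pt n) (hd : d ∈ D)
    (h1 : ∀ u ∈ D, A u ≤ g u)
    (h2 : ∀ DU, memRk k D DU → 0 ≤ Lk k A g DU)
    (g' : Pt n → ℝ)
    (hg' : ∀ u, g' u = if u = d then g d - deltaK k D A g d else g u) :
    (∀ u, g' u ≤ g u) ∧ (∀ u ∈ D, A u ≤ g' u) ∧
    (∀ DU, memRk k D DU → 0 ≤ Lk k A g' DU) ∧ deltaK k D A g' d = 0 := by
  have hδdef : deltaK k D A g d = min (Ppos k D A g d) (g d - A d) := rfl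
  have hδ0 : 0 ≤ deltaK k D A g d := by
    rw [hδdef]
    exact le_min (aux_Ppos_nonneg A g h2 d) (sub_nonneg.2 (h1 d hd))
  have hδle : deltaK k D A g d ≤ g d - A d := by rw [hδdef]; exact min_le_right _ _
  have hδleP : deltaK k D A g d ≤ Ppos k D A g d := by rw [hδdef]; exact min_le_left _ _
  have hle : ∀ u, g' u ≤ g u := by
    intro u
    rw [hg' u]
    split_ifs with h
    · rw [h]; linarith
    · exact le_rfl
  have hA' : ∀ u ∈ D, A u ≤ g' u := by
    intro u hu
    rw [hg' u]
    split_ifs with h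
    · rw [h]; linarith
    · exact h1 u hu
  have hgd : g d - g' d = deltaK k D A g d := by
    rw [hg' d, if_pos rfl]; ring
  have hLk' : ∀ DU, memRk k D DU → 0 ≤ Lk k A g' DU := by
    intro DU hDU
    have hupd := aux_Lk_update (k := k) A g g' d (fun u hu => by rw [hg' u, if_neg hu]) DU
    by_cases hm : 0 < multDU k DU d
    · rw [hupd, if_pos hm, hgd]
      have hmpos : (0:ℝ) < (multDU k DU d : ℝ) := by exact_mod_cast hm
      have hP := aux_Ppos_le A g h2 d DU hDU hm
      rw [abs_of_pos hmpos] at hP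
      have hkey : (multDU k DU d : ℝ) * deltaK k D A g d ≤ Lk k A g DU := by
        calc (multDU k DU d : ℝ) * deltaK k D A g d
            ≤ (multDU k DU d : ℝ) * (Lk k A g DU / (multDU k DU d : ℝ)) :=
              mul_le_mul_of_nonneg_left (hδleP.trans hP) hmpos.le
          _ = Lk k A g DU := mul_div_cancel₀ _ hmpos.ne'
      linarith
    · rw [hupd, if_neg hm, sub_zero]
      exact h2 DU hDU
  refine ⟨hle, hA', hLk', ?_⟩
  have hδ'def : deltaK k D A g' d = min (Ppos k D A g' d) (g' d - A d) := rfl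
  refine le_antisymm ?_ ?_
  · by_cases hcase : Ppos k D A g d ≤ g d - A d
    · have hδeq : deltaK k D A g d = Ppos k D A g d := by rw [hδdef]; exact min_eq_left hcase
      by_cases hne : ∃ DU : Multiset (Box n), memRk k D DU ∧ 0 < multDU k DU d
      · have hP'le : Ppos k D A g' d ≤ 0 := by
          by_contra hpos
          push_neg at hpos
          obtain ⟨DU, hDU, hm, hlt⟩ := aux_Ppos_exists_lt A g d hne hpos
          have hmpos : (0:ℝ) < (multDU k DU d : ℝ) := by exact_mod_cast hm
          have habs : |(multDU k DU d : ℝ)| = (multDU k DU d : ℝ) := abs_of_pos hmpos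
          have hupd := aux_Lk_update (k := k) A g g' d (fun u hu => by rw [hg' u, if_neg hu]) DU
          rw [if_pos hm, hgd, hδeq] at hupd
          have hP'a := aux_Ppos_le A g' hLk' d DU hDU hm
          rw [hupd, habs] at hP'a
          rw [habs] at hlt
          have hdiv : (Lk k A g DU - (multDU k DU d : ℝ) * Ppos k D A g d) /
              (multDU k DU d : ℝ)
              = Lk k A g DU / (multDU k DU d : ℝ) - Ppos k D A g d := by
            rw [sub_div, mul_div_cancel_left₀ _ hmpos.ne']
          rw [hdiv] at hP'a
          linarith
        rw [hδ'def]
        exact le_trans (min_le_left _ _) hP'le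
      · have hP'0 : Ppos k D A g' d = 0 := by
          unfold Ppos
          have he : {r : ℝ | ∃ DU : Multiset (Box n), memRk k D DU ∧ 0 < multDU k DU d ∧
              r = Lk k A g' DU / |(multDU k DU d : ℝ)|} = ∅ := by
            ext r
            simp only [Set.mem_setOf_eq, Set.mem_empty_iff_false, iff_false]
            rintro ⟨DU, ha, hb, -⟩
            exact hne ⟨DU, ha, hb⟩
          rw [he, Real.sInf_empty]
        rw [hδ'def]
        exact le_trans (min_le_left _ _) hP'0.le
    · push_neg at hcase
      have hδeq : deltaK k D A g d = g d - A d := by rw [hδdef]; exact min_eq_right hcase.le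
      have hz : g' d - A d = 0 := by rw [hg' d, if_pos rfl, hδeq]; ring
      rw [hδ'def]
      exact le_trans (min_le_right _ _) hz.le
  · rw [hδ'def]
    exact le_min (aux_Ppos_nonneg A g' hLk' d) (sub_nonneg.2 (hA' d hd))

/-- Iterative lowering sequence. -/
noncomputable def auxCseq {n : ℕ} (k : ℕ) (D : Set (Pt n)) (A B : Pt n → ℝ)
    (f : ℕ → Pt n) : ℕ → Pt n → ℝ
  | 0 => B
  | j + 1 => fun u =>
      if u = f j then
        auxCseq k D A B f j (f j) - deltaK k D A (auxCseq k D A B f j) (f j)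
      else auxCseq k D A B f j u

end AuxKIncr

/-- Proposition 5.2: existence of `C` on the mesh obtained by
lowering `B`. -/
theorem stmt11 (n k : ℕ) (hn : 1 ≤ n) (hk1 : 1 ≤ k) (hkn : k ≤ n)
    (D : Set (Pt n)) (hD : IsMesh D) (A B : Pt n → ℝ)
    (hAI : ∀ u ∈ D, A u ∈ Set.Icc (0:ℝ) 1) (hBI : ∀ u ∈ D, B u ∈ Set.Icc (0:ℝ) 1)
    (hAB : ∀ u ∈ D, A u ≤ B u)
    (hL : ∀ DU : Multiset (Box n), memRk k D DU → 0 ≤ Lk k A B DU) :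
    ∃ C : Pt n → ℝ,
      (∀ d ∈ D, A d ≤ C d ∧ C d ≤ B d) ∧
      (∀ d ∈ D, deltaK k D A C d = 0) ∧
      (∀ DU : Multiset (Box n), memRk k D DU → 0 ≤ Lk k A C DU) := by
  classical
  obtain ⟨δs, hδs, hDeq⟩ := hD
  -- D is countable
  have hDc : D.Countable := by
    rw [hDeq]
    exact Set.countable_pi fun i => (hδs i).2.1
  -- D is infinite
  have hDinf : D.Infinite := by
    set i0 : Fin n := ⟨0, hn⟩
    set φ : ℝ → Pt n := fun t => Function.update (fun _ => (0:ℝ)) i0 t with hφ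
    have hinj : Set.InjOn φ (δs i0) := by
      intro a _ b _ h
      have := congrFun h i0
      simpa [φ, Function.update_self] using this
    have himg : φ '' (δs i0) ⊆ D := by
      rw [hDeq]
      rintro x ⟨t, ht, rfl⟩ i
      rcases eq_or_ne i i0 with rfl | hne
      · simpa [φ, Function.update_self] using ht
      · rw [hφ]
        simp only [Function.update_of_ne hne]
        exact (hδs i).2.2.2.2.1
    exact Set.Infinite.mono himg (Set.Infinite.image hinj ((hδs i0).2.2.1))
  -- enumerate D injectively
  obtain ⟨hden⟩ := Set.countable_infinite_iff_nonempty_denumerable.1 ⟨hDc, hDinf⟩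
  let e : ℕ ≃ D := (@Denumerable.eqv D hden).symm
  let f : ℕ → Pt n := fun j => (e j : Pt n)
  have hfD : ∀ j, f j ∈ D := fun j => (e j).2
  have hfinj : Function.Injective f := fun a b h => e.injective (Subtype.ext h)
  have hfsurj : ∀ d ∈ D, ∃ j, f j = d := by
    intro d hd
    exact ⟨e.symm ⟨d, hd⟩, congrArg Subtype.val (e.apply_symm_apply ⟨d, hd⟩)⟩
  set G : ℕ → Pt n → ℝ := auxCseq k D A B f with hG
  have hGsucc : ∀ j u, G (j+1) u =
      if u = f j then G j (f j) - deltaK k D A (G j) (f j) else G j u := by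
    intro j u; rfl
  -- invariant
  have key : ∀ j, (∀ u ∈ D, A u ≤ G j u) ∧
      (∀ DU : Multiset (Box n), memRk k D DU → 0 ≤ Lk k A (G j) DU) := by
    intro j
    induction j with
    | zero => exact ⟨hAB, hL⟩
    | succ j ih =>
        have hst := aux_step A (G j) (f j) (hfD j) ih.1 ih.2 (G (j+1)) (hGsucc j)
        exact ⟨hst.2.1, hst.2.2.1⟩
  have hstep4 : ∀ j, deltaK k D A (G (j+1)) (f j) = 0 := by
    intro j
    exact (aux_step A (G j) (f j) (hfD j) (key j).1 (key j).2 (G (j+1)) (hGsucc j)).2.2.2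
  have hdec : ∀ j u, G (j+1) u ≤ G j u := by
    intro j
    exact (aux_step A (G j) (f j) (hfD j) (key j).1 (key j).2 (G (j+1)) (hGsucc j)).1

  have hmono : ∀ j m, j ≤ m → ∀ u, G m u ≤ G j u := by
    intro j m hjm u
    induction m, hjm using Nat.le_induction with
    | base => exact le_rfl
    | succ m hjm ih => exact (hdec m u).trans ih
  have hstab : ∀ j m, j < m → G m (f j) = G (j+1) (f j) := by
    intro j m hjm
    induction m with
    | zero => omega
    | succ m ih =>
        rcases Nat.lt_succ_iff_lt_or_eq.1 hjm with h | h
        · have hne : f j ≠ f m := fun he => (Nat.ne_of_lt h) (hfinj he)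
          rw [hGsucc m (f j), if_neg hne]
          exact ih h
        · rw [h]
  have hGout : ∀ m u, (¬ ∃ j, f j = u) → G m u = B u := by
    intro m u hu
    induction m with
    | zero => rfl
    | succ m ih =>
        rw [hGsucc m u, if_neg (fun he => hu ⟨m, he.symm⟩)]
        exact ih
  -- the limit function
  set C : Pt n → ℝ :=
    fun u => if h : ∃ j, f j = u then G (Nat.find h + 1) u else B u with hC
  have hCdef : ∀ u (h : ∃ j, f j = u), C u = G (Nat.find h + 1) u := by
    intro u h
    rw [hC]
    exact dif_pos h
  have hCstab : ∀ u (h : ∃ j, f j = u) m, Nat.find h + 1 ≤ m → C u = G m u := by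
    intro u h m hm
    rw [hCdef u h]
    rcases Nat.eq_or_lt_of_le hm with heq | hlt
    · rw [heq]
    · have hfu : f (Nat.find h) = u := Nat.find_spec h
      have hst := hstab (Nat.find h) m (by omega)
      rw [hfu] at hst
      exact hst.symm
  have hCle : ∀ m u, C u ≤ G m u := by
    intro m u
    by_cases h : ∃ j, f j = u
    · rcases le_or_gt m (Nat.find h + 1) with hm | hm
      · rw [hCdef u h]
        exact hmono m (Nat.find h + 1) hm u
      · rw [hCstab u h m hm.le]
    · rw [hC]
      simp only [dif_neg h]
      rw [hGout m u h]
  -- part (iii)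
  have part3 : ∀ DU : Multiset (Box n), memRk k D DU → 0 ≤ Lk k A C DU := by
    intro DU hDU
    set F := DU.toFinset.biUnion Box.vertices with hF
    have hFD : ∀ u ∈ F, u ∈ D := by
      intro u hu
      obtain ⟨R, hR, hv⟩ := Finset.mem_biUnion.1 hu
      exact (hDU R (Multiset.mem_toFinset.1 hR)).2 u hv
    set idx : Pt n → ℕ := fun u => if h : ∃ j, f j = u then Nat.find h + 1 else 0
      with hidx
    set M := F.sup idx with hM
    have hCF : ∀ u ∈ F, C u = G M u := by
      intro u hu
      have h : ∃ j, f j = u := hfsurj u (hFD u hu)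
      apply hCstab u h
      have h1 : idx u ≤ M := Finset.le_sup hu
      rw [hidx] at h1
      simpa only [dif_pos h] using h1
    have : Lk k A C DU = Lk k A (G M) DU := aux_Lk_congr A C (G M) DU hCF
    rw [this]
    exact (key M).2 DU hDU
  -- part (i)
  have part1 : ∀ d ∈ D, A d ≤ C d ∧ C d ≤ B d := by
    intro d hd
    have h : ∃ j, f j = d := hfsurj d hd
    constructor
    · rw [hCdef d h]
      exact (key _).1 d hd
    · exact hCle 0 d
  refine ⟨C, part1, ?_, part3⟩
  -- part (ii)
  intro d hd
  have h : ∃ j, f j = d := hfsurj d hd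
  set j := Nat.find h with hj
  have hfj : f j = d := Nat.find_spec h
  have hCd : C d = G (j+1) d := hCdef d h
  have hz : deltaK k D A (G (j+1)) d = 0 := by
    rw [← hfj]
    exact hstep4 j
  have hdd : deltaK k D A C d = min (Ppos k D A C d) (C d - A d) := rfl
  have hdd' : deltaK k D A (G (j+1)) d
      = min (Ppos k D A (G (j+1)) d) (G (j+1) d - A d) := rfl
  have hge : 0 ≤ deltaK k D A C d := by
    rw [hdd]
    exact le_min (aux_Ppos_nonneg A C part3 d) (sub_nonneg.2 (part1 d hd).1)
  have hle2 : deltaK k D A C d ≤ deltaK k D A (G (j+1)) d := by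
    rw [hdd, hdd']
    apply min_le_min
    · exact aux_Ppos_mono A (G (j+1)) C (hCle (j+1)) (key (j+1)).2 part3 d
    · rw [hCd]
  linarith [hz ▸ hle2]
end
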